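/- For every μ with 1/2 < μ ≤ 1, one has |h_μ(μ) − μ| ≤ (1/2)·(1−μ) + (1−μ)². -/

import Mathlib

open Set

/-- `h : [0,1] → [0,1]` satisfies the commuter functional equation for `T_μ`:
`h(x) = (1/2)·h(2μx)` for `0 ≤ x ≤ 1/2` and `h(x) = 1 - (1/2)·h(2μ(1-x))` for `1/2 < x ≤ 1`. -/
def IsCommuter (μ : ℝ) (h : ℝ → ℝ) : Prop :=
  (∀ x ∈ Icc (0:ℝ) 1, h x ∈ Icc (0:ℝ) 1) ∧
  (∀ x : ℝ, 0 ≤ x → x ≤ 1/2 → h x = (1/2) * h (2*μ*x)) ∧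
  (∀ x : ℝ, 1/2 < x → x ≤ 1 → h x = 1 - (1/2) * h (2*μ*(1-x)))

open Filter Topology

/-!
Each branch of the functional equation halves the defect `|h x - x|` up to an error of
`(1 - μ)/2`: if `|h y - y| ≤ ε` on `[0,1]` then `|h x - x| ≤ (1 - μ)/2 + ε/2`. Iterating from
`ε = 1` gives `|h x - x| ≤ 1 - μ` on `[0,1]`. Unfolding the equation twice at `μ` gives
`h μ = 1 - h z / 4` with `z = 4μ²(1 - μ)`, and `1 - z/4 - μ = (1 - μ)²(1 + μ)`. Adding the defect
`(1 - μ)/4` of `h z / 4` and using `μ(1 - μ) ≤ 1/4` gives the bound.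
-/

namespace IsCommuter

variable {μ : ℝ} {h : ℝ → ℝ}

theorem abs_sub_le_half_add (hμ0 : 0 ≤ μ) (hμ1 : μ ≤ 1) (hc : IsCommuter μ h) {ε : ℝ}
    (hε : ∀ y ∈ Icc (0 : ℝ) 1, |h y - y| ≤ ε) :
    ∀ x ∈ Icc (0 : ℝ) 1, |h x - x| ≤ (1 - μ) / 2 + ε / 2 := by
  rintro x ⟨hx0, hx1⟩
  rcases le_or_gt x (1 / 2) with hx | hx
  · have hy := abs_le.mp (hε (2 * μ * x) ⟨by positivity, by nlinarith⟩)
    rw [hc.2.1 x hx0 hx, abs_le]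
    constructor <;> nlinarith
  · have hy := abs_le.mp (hε (2 * μ * (1 - x)) ⟨by nlinarith, by nlinarith⟩)
    rw [hc.2.2 x hx hx1, abs_le]
    constructor <;> nlinarith

theorem abs_sub_le_add_pow (hμ0 : 0 ≤ μ) (hμ1 : μ ≤ 1) (hc : IsCommuter μ h) (n : ℕ) :
    ∀ x ∈ Icc (0 : ℝ) 1, |h x - x| ≤ (1 - μ) + (1 / 2) ^ n := by
  induction n with
  | zero =>
    intro x hx
    have hhx := hc.1 x hx
    rw [abs_le]
    constructor <;> linarith [hx.1, hx.2, hhx.1, hhx.2]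
  | succ n ih =>
    intro x hx
    calc |h x - x| ≤ (1 - μ) / 2 + ((1 - μ) + (1 / 2) ^ n) / 2 :=
          hc.abs_sub_le_half_add hμ0 hμ1 ih x hx
      _ = (1 - μ) + (1 / 2) ^ (n + 1) := by ring

theorem abs_sub_le (hμ0 : 0 ≤ μ) (hμ1 : μ ≤ 1) (hc : IsCommuter μ h) {x : ℝ}
    (hx : x ∈ Icc (0 : ℝ) 1) : |h x - x| ≤ 1 - μ := by
  have hlim : Tendsto (fun n : ℕ => (1 - μ) + (1 / 2 : ℝ) ^ n) atTop (𝓝 (1 - μ)) := by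
    simpa using tendsto_const_nhds.add
      (tendsto_pow_atTop_nhds_zero_of_lt_one (by norm_num : (0 : ℝ) ≤ 1 / 2) (by norm_num))
  exact ge_of_tendsto' hlim fun n => hc.abs_sub_le_add_pow hμ0 hμ1 n x hx

theorem apply_self_eq (hμ0 : 1 / 2 < μ) (hμ1 : μ ≤ 1) (hc : IsCommuter μ h) :
    h μ = 1 - h (4 * μ ^ 2 * (1 - μ)) / 4 := by
  have ha : 2 * μ * (1 - μ) ≤ 1 / 2 := by nlinarith [sq_nonneg (2 * μ - 1)]
  rw [hc.2.2 μ hμ0 hμ1, hc.2.1 _ (by nlinarith) ha]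
  ring_nf

end IsCommuter

theorem commuter_apply_self_bound (μ : ℝ) (hμ1 : 1/2 < μ) (hμ2 : μ ≤ 1)
    (h : ℝ → ℝ) (hc : IsCommuter μ h) :
    |h μ - μ| ≤ (1/2) * (1 - μ) + (1 - μ)^2 := by
  set z := 4 * μ ^ 2 * (1 - μ)
  have hz : z ∈ Icc (0 : ℝ) 1 :=
    ⟨by positivity, by nlinarith [sq_nonneg (3 * μ - 2), sq_nonneg (μ - 1)]⟩
  have hdefect := abs_le.mp (hc.abs_sub_le (by linarith) hμ2 hz)
  have hsplit : h μ - μ = (1 - μ) ^ 2 * (1 + μ) - (h z - z) / 4 := by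
    rw [hc.apply_self_eq hμ1 hμ2]
    ring
  have hμ_mul : μ * (1 - μ) ≤ 1 / 4 := by nlinarith [sq_nonneg (2 * μ - 1)]
  rw [hsplit, abs_le]
  constructor <;> nlinarith
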